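/- arXiv:math/9201237 — 3 statements merged into one kernel-verified Lean document; each statement's English description precedes it below -/
import Mathlib

section
/- Let k ≥ 1 be an integer. For every z ∈ Z_k and every a ∈ ℝ, |a| ≤ ‖z + a·u‖ in X_k. (Equivalently, the linear functional φ on span(Z_k ∪ {u}) defined by φ(z + a·u) = a has norm at most 1.) -/
open MeasureTheory Set ENNReal

/-- The weak `L^p` "norm": `sup { (∫_B |f| dμ) / μ(B)^(1/q) }` over measurable `B`
with `0 < μ B < ∞`, computed in `ℝ≥0∞`. -/
noncomputable def wnorm {α : Type*} [MeasurableSpace α] (q : ℝ) (μ : Measure α)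
    (f : α → ℝ) : ℝ≥0∞ :=
  ⨆ (B : Set α) (_ : MeasurableSet B ∧ 0 < μ B ∧ μ B < ⊤),
    (∫⁻ x in B, ENNReal.ofReal |f x| ∂μ) / μ B ^ (1 / q)

/-- The set `{f ≠ 0}` is σ-finite for `μ`. -/
def SigmaFinSupp {α : Type*} [MeasurableSpace α] (μ : Measure α) (f : α → ℝ) : Prop :=
  ∃ s : ℕ → Set α, {x | f x ≠ 0} ⊆ (⋃ n, s n) ∧ ∀ n, μ (s n) < ⊤

/-- Membership in the weak `L^p` space. -/
def MemW {α : Type*} [MeasurableSpace α] (q : ℝ) (μ : Measure α) (f : α → ℝ) : Prop :=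
  Measurable f ∧ SigmaFinSupp μ f ∧ wnorm q μ f < ⊤

/-- The ambient space of `X_k = (∑_{n≥0} ⊕ ℓ^{p,∞}(k·2^n))_{ℓ∞}`: all sequences
`x = (x_n)` with `x_n` a `k·2^n`-tuple of reals. -/
abbrev XFull (k : ℕ) := (n : ℕ) → Fin (k * 2 ^ n) → ℝ

/-- The norm of `X_k`: `sup_n ‖x_n‖`, where `‖·‖` is the weak `ℓ^p` norm
(counting measure on `Fin (k·2^n)`). -/
noncomputable def Xnorm (q : ℝ) (k : ℕ) (x : XFull k) : ℝ≥0∞ :=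
  ⨆ n, wnorm q (Measure.count : Measure (Fin (k * 2 ^ n))) (x n)

/-- Membership in `X_k`. -/
def MemX (q : ℝ) (k : ℕ) (x : XFull k) : Prop := Xnorm q k x < ⊤

lemma two_mul_succ_lt {k n j : ℕ} (h : j < k * 2 ^ n) : 2 * j + 1 < k * 2 ^ (n + 1) := by
  rw [pow_succ, ← mul_assoc]; omega

/-- `Z_k ⊆ X_k`: elements whose coordinate sums eventually vanish. -/
def Zset (q : ℝ) (k : ℕ) : Set (XFull k) :=
  {x | MemX q k x ∧ ∃ i : ℕ, ∀ n ≥ i, ∑ j, x n j = 0}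

/-- The element `u ∈ X_k`, `u_n(j) = (k·2^n)^{-1/p}`. -/
noncomputable def uElt (p : ℝ) (k : ℕ) : XFull k :=
  fun n _ => ((k : ℝ) * 2 ^ n) ^ (-(1 / p))


/-!
At a level `i` beyond which the coordinate sums of `z` vanish, the coordinates of `z + a • u`
sum to `a · m · m^{-1/p} = a · m^{1/q}` with `m = k · 2^i`, since `1/p + 1/q = 1`. Testing the
weak-`ℓ^p` norm of that level on the whole index set `F = {1, …, m}` therefore gives at least
`|a| · m^{1/q} / m^{1/q} = |a|`.
-/

lemma setLIntegral_div_rpow_le_wnorm {α : Type*} [MeasurableSpace α] (q : ℝ) (μ : Measure α)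
    (f : α → ℝ) {B : Set α} (hB : MeasurableSet B) (hμB₀ : 0 < μ B) (hμB : μ B < ⊤) :
    (∫⁻ x in B, ENNReal.ofReal |f x| ∂μ) / μ B ^ (1 / q) ≤ wnorm q μ f :=
  le_iSup₂ (f := fun B (_ : MeasurableSet B ∧ 0 < μ B ∧ μ B < ⊤) =>
    (∫⁻ x in B, ENNReal.ofReal |f x| ∂μ) / μ B ^ (1 / q)) B ⟨hB, hμB₀, hμB⟩

lemma abs_sum_div_rpow_card_le_wnorm_count {α : Type*} [Fintype α] [Nonempty α]
    [MeasurableSpace α] [MeasurableSingletonClass α] (q : ℝ) (f : α → ℝ) :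
    ENNReal.ofReal (|∑ x, f x| / (Fintype.card α : ℝ) ^ (1 / q)) ≤ wnorm q Measure.count f := by
  have hcard : (Measure.count : Measure α) univ = Fintype.card α := by
    rw [Measure.count_univ, ENat.card_eq_coe_fintype_card, ENat.toENNReal_coe]
  have hcard_pos : (0 : ℝ) < Fintype.card α := by exact_mod_cast Fintype.card_pos
  have hsum : ENNReal.ofReal |∑ x, f x| ≤ ∫⁻ x in univ, ENNReal.ofReal |f x| ∂Measure.count :=
    calc ENNReal.ofReal |∑ x, f x| ≤ ENNReal.ofReal (∑ x, |f x|) :=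
          ENNReal.ofReal_le_ofReal (Finset.abs_sum_le_sum_abs _ _)
      _ = ∫⁻ x in univ, ENNReal.ofReal |f x| ∂Measure.count := by
          rw [Measure.restrict_univ, lintegral_count, tsum_fintype,
            ENNReal.ofReal_sum_of_nonneg fun x _ => abs_nonneg _]
  calc ENNReal.ofReal (|∑ x, f x| / (Fintype.card α : ℝ) ^ (1 / q))
      = ENNReal.ofReal |∑ x, f x| / (Measure.count : Measure α) univ ^ (1 / q) := by
        rw [hcard, ← ENNReal.ofReal_natCast, ENNReal.ofReal_rpow_of_pos hcard_pos,
          ENNReal.ofReal_div_of_pos (Real.rpow_pos_of_pos hcard_pos _)]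
    _ ≤ (∫⁻ x in univ, ENNReal.ofReal |f x| ∂Measure.count) /
          (Measure.count : Measure α) univ ^ (1 / q) := ENNReal.div_le_div_right hsum _
    _ ≤ wnorm q Measure.count f :=
        setLIntegral_div_rpow_le_wnorm q Measure.count f MeasurableSet.univ
          (by simpa [hcard] using Fintype.card_pos) (by simp [hcard])

lemma sum_uElt {p q : ℝ} (hpq : p.HolderConjugate q) (k n : ℕ) :
    ∑ j, uElt p k n j = ((k : ℝ) * 2 ^ n) ^ (1 / q) := by
  have hexp : 1 + -(1 / p) = 1 / q := by
    rw [one_div, one_div, ← sub_eq_add_neg, hpq.one_sub_inv]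
  simp only [uElt, Finset.sum_const, Finset.card_univ, Fintype.card_fin, nsmul_eq_mul]
  rw [← hexp, Real.rpow_add' (by positivity) (hexp ▸ one_div_ne_zero hpq.symm.ne_zero),
    Real.rpow_one]
  push_cast
  ring

/-- Lemma 3 of the paper: the functional `φ(z + a·u) = a` on `span(Z_k ∪ {u})` has norm
at most `1`; equivalently, `|a| ≤ ‖z + a·u‖` for every `z ∈ Z_k` and `a ∈ ℝ`. -/
theorem abs_le_norm_add_smul_u (p q : ℝ) (hp : 1 < p) (hq : q = p / (p - 1))
    (k : ℕ) (hk : 1 ≤ k) (z : XFull k) (hz : z ∈ Zset q k) (a : ℝ) :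
    ENNReal.ofReal |a| ≤ Xnorm q k (z + a • uElt p k) := by
  have hpq : p.HolderConjugate q := (Real.holderConjugate_iff_eq_conjExponent hp).2 hq
  obtain ⟨-, i, hz_sum⟩ := hz
  have : Nonempty (Fin (k * 2 ^ i)) := ⟨⟨0, by positivity⟩⟩
  have hm : (0 : ℝ) < (k : ℝ) * 2 ^ i := by positivity
  have hsum : ∑ j, (z + a • uElt p k) i j = a * ((k : ℝ) * 2 ^ i) ^ (1 / q) := by
    simp only [Pi.add_apply, Pi.smul_apply, smul_eq_mul, Finset.sum_add_distrib,
      ← Finset.mul_sum, hz_sum i le_rfl, sum_uElt hpq, zero_add]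
  calc ENNReal.ofReal |a|
      = ENNReal.ofReal (|∑ j, (z + a • uElt p k) i j| /
          (Fintype.card (Fin (k * 2 ^ i)) : ℝ) ^ (1 / q)) := by
        rw [hsum, Fintype.card_fin, abs_mul, Nat.cast_mul, Nat.cast_pow, Nat.cast_ofNat,
          abs_of_pos (Real.rpow_pos_of_pos hm _),
          mul_div_cancel_right₀ _ (Real.rpow_pos_of_pos hm _).ne']
    _ ≤ wnorm q Measure.count ((z + a • uElt p k) i) :=
        abs_sum_div_rpow_card_le_wnorm_count q _
    _ ≤ Xnorm q k (z + a • uElt p k) :=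
        le_iSup (fun n => wnorm q (Measure.count : Measure (Fin (k * 2 ^ n)))
          ((z + a • uElt p k) n)) i
end

section
/- Let k ≥ 1 be an integer and let Φ be as in the context. For every n ≥ 0, sup{|Φ_{n,1}(x)| : x ∈ X_k, ‖x‖ ≤ 1} ≤ (k·2^n)^{-1/q} · sup{|Φ(x)| : x ∈ X_k, ‖x‖ ≤ 1}. -/
/-!
Since `Φ` vanishes on `Z_k`, `Φ y = Φ w` whenever `y` and `w` have the same coordinate sums
on every level `m ≥ n`. Take `y = χ_{A_{n,1}} x` and let `w_m` be the constant vector with the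
mean of `y_m` for `m ≥ n`. On level `m ≥ n` the set `A_{n,1}` has at most `2^(m-n)` points, so
the weak `ℓ^p` norm bounds the sum of `y_m` by `(2^(m-n))^(1/q) ‖x‖`, and a constant vector of
length `k 2^m` with this mean has norm at most `(2^(m-n))^(1/q) (k 2^m)^(-1/q) = (k 2^n)^(-1/q)`.
Hence `|Φ_{n,1} x| = |Φ w| ≤ ‖w‖ ≤ (k 2^n)^(-1/q)`, while `‖Φ‖ ≥ Φ u = 1` because `‖u‖ ≤ 1`.
-/

open MeasureTheory Set ENNReal

/-- Coordinatewise multiplication of `x ∈ X_k` by the indicator of a set of index pairs. -/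
noncomputable def chiMul {k : ℕ} (A : (m : ℕ) → Set (Fin (k * 2 ^ m))) (x : XFull k) :
    XFull k :=
  fun m => (A m).indicator (x m)

/-- The index set `A_{n,j}` (the support of `T_k χ_{[(j-1)/2^n, j/2^n]}`): pairs `(m,i)`
such that the dyadic interval of `(m,i)` meets that of `(n,j)` in positive Lebesgue
measure (all indices 0-indexed). -/
def Aset (k n : ℕ) (j : Fin (k * 2 ^ n)) : (m : ℕ) → Set (Fin (k * 2 ^ m)) :=
  fun m => {i | 0 < volume (Icc ((i : ℕ) / 2 ^ m : ℝ) (((i : ℕ) + 1) / 2 ^ m) ∩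
    Icc ((j : ℕ) / 2 ^ n : ℝ) (((j : ℕ) + 1) / 2 ^ n))}

open scoped BigOperators Finset

lemma one_sub_one_div_nonneg {q : ℝ} (hq : 1 ≤ q) : 0 ≤ 1 - 1 / q :=
  sub_nonneg.2 ((div_le_one (by linarith)).2 hq)

lemma abs_div_mul_rpow_one_sub_le {σ t b r : ℝ} (ht : 0 < t) (hb : 0 < b)
    (hσ : |σ| ≤ t ^ r) :
    |σ / (t * b)| * (t * b) ^ (1 - r) ≤ b ^ (-r) := by
  have htb : 0 < t * b := mul_pos ht hb
  calc |σ / (t * b)| * (t * b) ^ (1 - r) = |σ| * (t ^ r)⁻¹ * b ^ (-r) := by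
        rw [abs_div, abs_of_pos htb, Real.rpow_sub htb, Real.rpow_one, Real.mul_rpow ht.le hb.le,
          Real.rpow_neg hb.le]
        field_simp
    _ ≤ t ^ r * (t ^ r)⁻¹ * b ^ (-r) := by gcongr
    _ = b ^ (-r) := by rw [mul_inv_cancel₀ (by positivity), one_mul]

section WeakNorm

variable {α : Type*} [MeasurableSpace α] {q : ℝ} {μ : Measure α}

lemma wnorm_le {f : α → ℝ} {C : ℝ≥0∞}
    (h : ∀ B, MeasurableSet B → 0 < μ B → μ B < ⊤ →
      (∫⁻ x in B, ENNReal.ofReal |f x| ∂μ) / μ B ^ (1 / q) ≤ C) :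
    wnorm q μ f ≤ C :=
  iSup₂_le fun B hB => h B hB.1 hB.2.1 hB.2.2

lemma le_wnorm (f : α → ℝ) {B : Set α} (hB : MeasurableSet B) (h0 : 0 < μ B) (ht : μ B < ⊤) :
    (∫⁻ x in B, ENNReal.ofReal |f x| ∂μ) / μ B ^ (1 / q) ≤ wnorm q μ f :=
  le_iSup₂_of_le B ⟨hB, h0, ht⟩ le_rfl

lemma wnorm_mono {f g : α → ℝ} (h : ∀ x, |f x| ≤ |g x|) : wnorm q μ f ≤ wnorm q μ g :=
  iSup₂_mono fun _ _ =>
    ENNReal.div_le_div_right (lintegral_mono fun x => ENNReal.ofReal_le_ofReal (h x)) _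

lemma wnorm_sub_le {f : α → ℝ} (hf : Measurable f) (g : α → ℝ) :
    wnorm q μ (f - g) ≤ wnorm q μ f + wnorm q μ g := by
  refine wnorm_le fun B hB h0 ht => ?_
  have hint : ∫⁻ x in B, ENNReal.ofReal |(f - g) x| ∂μ ≤
      (∫⁻ x in B, ENNReal.ofReal |f x| ∂μ) + ∫⁻ x in B, ENNReal.ofReal |g x| ∂μ := by
    rw [← lintegral_add_left hf.abs.ennreal_ofReal]
    refine lintegral_mono fun x => ?_
    rw [← ENNReal.ofReal_add (abs_nonneg _) (abs_nonneg _)]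
    exact ENNReal.ofReal_le_ofReal (abs_sub _ _)
  calc _ ≤ _ := ENNReal.div_le_div_right hint _
    _ = _ := ENNReal.add_div
    _ ≤ _ := add_le_add (le_wnorm f hB h0 ht) (le_wnorm g hB h0 ht)

lemma wnorm_const_le (hq : 1 ≤ q) (c : ℝ) :
    wnorm q μ (fun _ => c) ≤ ENNReal.ofReal |c| * μ univ ^ (1 - 1 / q) := by
  refine wnorm_le fun B _ h0 ht => ?_
  calc (∫⁻ _ in B, ENNReal.ofReal |c| ∂μ) / μ B ^ (1 / q)
      = ENNReal.ofReal |c| * μ B ^ (1 - 1 / q) := by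
        rw [setLIntegral_const, mul_div_assoc, ENNReal.rpow_sub _ _ h0.ne' ht.ne,
          ENNReal.rpow_one]
    _ ≤ _ := by have := one_sub_one_div_nonneg hq; gcongr; exact subset_univ B

lemma ofReal_abs_sum_le_wnorm_mul [MeasurableSingletonClass α] (f : α → ℝ) (B : Finset α) :
    ENNReal.ofReal |∑ i ∈ B, f i| ≤ wnorm q Measure.count f * (#B : ℝ≥0∞) ^ (1 / q) := by
  rcases B.eq_empty_or_nonempty with rfl | hB
  · simp
  have hcount : Measure.count (B : Set α) = #B := Measure.count_apply_finset B
  have h0 : 0 < Measure.count (B : Set α) := by simpa [hcount] using hB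
  have ht : Measure.count (B : Set α) < ⊤ := by simp [hcount]
  have hsum :
      ENNReal.ofReal |∑ i ∈ B, f i| ≤ ∫⁻ x in B, ENNReal.ofReal |f x| ∂Measure.count := by
    rw [lintegral_finset]
    calc ENNReal.ofReal |∑ i ∈ B, f i| ≤ ENNReal.ofReal (∑ i ∈ B, |f i|) :=
          ENNReal.ofReal_le_ofReal (Finset.abs_sum_le_sum_abs _ _)
      _ = ∑ i ∈ B, ENNReal.ofReal |f i| * Measure.count {i} := by
          simp [ENNReal.ofReal_sum_of_nonneg (fun i _ => abs_nonneg (f i))]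
  rw [← hcount, ← ENNReal.div_le_iff (by simp [hB.ne_empty]) (by simp [hB.ne_empty])]
  exact (ENNReal.div_le_div_right hsum _).trans (le_wnorm f B.measurableSet h0 ht)

lemma wnorm_count_const_le {N : ℕ} (hq : 1 ≤ q) (c : ℝ) :
    wnorm q (Measure.count : Measure (Fin N)) (fun _ => c) ≤
      ENNReal.ofReal (|c| * (N : ℝ) ^ (1 - 1 / q)) := by
  refine (wnorm_const_le hq c).trans_eq ?_
  rw [Measure.count_univ, ENat.card_eq_coe_fintype_card, Fintype.card_fin, ENat.toENNReal_coe,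
    ENNReal.ofReal_mul (abs_nonneg c), ← ENNReal.ofReal_natCast,
    ENNReal.ofReal_rpow_of_nonneg (Nat.cast_nonneg N) (one_sub_one_div_nonneg hq)]

end WeakNorm

section SequenceSpace

variable {q : ℝ} {k : ℕ}

lemma wnorm_le_Xnorm (x : XFull k) (m : ℕ) :
    wnorm q (Measure.count : Measure (Fin (k * 2 ^ m))) (x m) ≤ Xnorm q k x :=
  le_iSup (fun m => wnorm q (Measure.count : Measure (Fin (k * 2 ^ m))) (x m)) m

lemma Xnorm_sub_le (x y : XFull k) : Xnorm q k (x - y) ≤ Xnorm q k x + Xnorm q k y :=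
  iSup_le fun m => (wnorm_sub_le (measurable_of_countable (x m)) (y m)).trans
    (add_le_add (wnorm_le_Xnorm x m) (wnorm_le_Xnorm y m))

lemma MemX.sub {x y : XFull k} (hx : MemX q k x) (hy : MemX q k y) : MemX q k (x - y) :=
  (Xnorm_sub_le x y).trans_lt (ENNReal.add_lt_top.2 ⟨hx, hy⟩)

lemma Xnorm_chiMul_le (A : (m : ℕ) → Set (Fin (k * 2 ^ m))) (x : XFull k) :
    Xnorm q k (chiMul A x) ≤ Xnorm q k x :=
  iSup_mono fun m => wnorm_mono fun i => norm_indicator_le_norm_self (s := A m) (x m) i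

end SequenceSpace

section Dyadic

variable {k n m : ℕ}

lemma mem_Aset_zero_iff (h : 0 < k * 2 ^ n) (i : Fin (k * 2 ^ m)) :
    i ∈ Aset k n ⟨0, h⟩ m ↔ (i : ℕ) * 2 ^ n < 2 ^ m := by
  have h2m : (0 : ℝ) < 2 ^ m := by positivity
  have h2n : (0 : ℝ) < 2 ^ n := by positivity
  have hi : (0 : ℝ) ≤ (i : ℕ) / 2 ^ m := by positivity
  simp only [Aset, mem_ofPred_eq, Icc_inter_Icc, Real.volume_Icc, ENNReal.ofReal_pos, sub_pos,
    Nat.cast_zero, zero_div, zero_add, sup_of_le_left hi, lt_inf_iff]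
  rw [div_lt_div_iff_of_pos_right h2m, div_lt_div_iff₀ h2m h2n, one_mul]
  norm_cast
  simp

lemma card_filter_mul_pow_lt_le (N : ℕ) (hnm : n ≤ m) :
    #{i : Fin N | (i : ℕ) * 2 ^ n < 2 ^ m} ≤ 2 ^ (m - n) := by
  have hpow : 2 ^ m = 2 ^ (m - n) * 2 ^ n := by rw [← pow_add, Nat.sub_add_cancel hnm]
  calc #{i : Fin N | (i : ℕ) * 2 ^ n < 2 ^ m} ≤ #(Finset.range (2 ^ (m - n))) := by
        refine Finset.card_le_card_of_injOn (fun i => (i : ℕ)) (fun i hi => ?_)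
          Fin.val_injective.injOn
        have hi := (Finset.mem_filter.1 hi).2
        simpa using lt_of_mul_lt_mul_right (hi.trans_eq hpow) (Nat.zero_le _)
    _ = 2 ^ (m - n) := Finset.card_range _

lemma abs_sum_chiMul_Aset_zero_le {q : ℝ} (hq : 0 < q) (h : 0 < k * 2 ^ n) (hnm : n ≤ m)
    {x : XFull k} (hx : Xnorm q k x ≤ 1) :
    |∑ j, chiMul (Aset k n ⟨0, h⟩) x m j| ≤ ((2 : ℝ) ^ (m - n)) ^ (1 / q) := by
  classical
  rw [← ENNReal.ofReal_le_ofReal_iff (by positivity), chiMul,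
    Finset.sum_indicator_eq_sum_filter, Finset.filter_congr fun i _ => mem_Aset_zero_iff h i]
  refine (ofReal_abs_sum_le_wnorm_mul (q := q) (x m) _).trans ?_
  calc wnorm q Measure.count (x m) *
        (#{i : Fin (k * 2 ^ m) | (i : ℕ) * 2 ^ n < 2 ^ m} : ℝ≥0∞) ^ (1 / q)
      ≤ 1 * ((2 ^ (m - n) : ℕ) : ℝ≥0∞) ^ (1 / q) := by
        gcongr
        · exact (wnorm_le_Xnorm x m).trans hx
        · exact card_filter_mul_pow_lt_le _ hnm
    _ = ENNReal.ofReal (((2 : ℝ) ^ (m - n)) ^ (1 / q)) := by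
        rw [one_mul, ← ENNReal.ofReal_natCast,
          ENNReal.ofReal_rpow_of_nonneg (by positivity) (by positivity)]
        norm_cast

end Dyadic

section TailMean

variable {q : ℝ} {k n : ℕ}

noncomputable def tailMean (n : ℕ) (y : XFull k) : XFull k :=
  fun m _ => if n ≤ m then 𝔼 j, y m j else 0

lemma tailMean_of_le {m : ℕ} (y : XFull k) (hnm : n ≤ m) :
    tailMean n y m = fun _ => 𝔼 j, y m j :=
  funext fun _ => if_pos hnm

lemma tailMean_of_lt {m : ℕ} (y : XFull k) (hmn : m < n) : tailMean n y m = fun _ => 0 :=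
  funext fun _ => if_neg hmn.not_ge

lemma sum_tailMean {m : ℕ} (y : XFull k) (hnm : n ≤ m) :
    ∑ j, tailMean n y m j = ∑ j, y m j := by
  rw [tailMean_of_le y hnm, Finset.sum_const, Finset.card_smul_expect]

lemma sub_tailMean_mem_Zset {y : XFull k} (hy : MemX q k y) (hw : MemX q k (tailMean n y)) :
    y - tailMean n y ∈ Zset q k :=
  ⟨hy.sub hw, n, fun m hm => by simp [Finset.sum_sub_distrib, sum_tailMean y hm]⟩

lemma Phi_eq_Phi_tailMean {Φ : XFull k → ℝ}
    (hΦadd : ∀ x y : XFull k, MemX q k x → MemX q k y → Φ (x + y) = Φ x + Φ y)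
    (hΦZ : ∀ z ∈ Zset q k, Φ z = 0) {y : XFull k} (hy : MemX q k y)
    (hw : MemX q k (tailMean n y)) : Φ y = Φ (tailMean n y) := by
  have := hΦadd _ _ hw (hy.sub hw)
  rwa [add_sub_cancel, hΦZ _ (sub_tailMean_mem_Zset hy hw), add_zero] at this

lemma Xnorm_tailMean_chiMul_Aset_zero_le (hq : 1 ≤ q) (h : 0 < k * 2 ^ n) {x : XFull k}
    (hx : Xnorm q k x ≤ 1) :
    Xnorm q k (tailMean n (chiMul (Aset k n ⟨0, h⟩) x)) ≤
      ENNReal.ofReal (((k : ℝ) * 2 ^ n) ^ (-(1 / q))) := by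
  refine iSup_le fun m => ?_
  rcases le_or_gt n m with hnm | hmn
  · have hN : ((k * 2 ^ m : ℕ) : ℝ) = 2 ^ (m - n) * ((k : ℝ) * 2 ^ n) := by
      push_cast; rw [mul_left_comm, ← pow_add, Nat.sub_add_cancel hnm]
    rw [tailMean_of_le _ hnm, Finset.expect_eq_sum_div_card, Finset.card_univ, Fintype.card_fin]
    refine (wnorm_count_const_le hq _).trans (ENNReal.ofReal_le_ofReal ?_)
    rw [hN]
    exact abs_div_mul_rpow_one_sub_le (by positivity) (by exact_mod_cast h)
      (abs_sum_chiMul_Aset_zero_le (by linarith) h hnm hx)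
  · rw [tailMean_of_lt _ hmn]
    exact (wnorm_count_const_le hq 0).trans (by simp)

end TailMean

lemma Xnorm_uElt_le {p q : ℝ} (hpq : p.HolderConjugate q) (k : ℕ) :
    Xnorm q k (uElt p k) ≤ 1 := by
  refine iSup_le fun m =>
    (wnorm_count_const_le hpq.symm.lt.le (((k : ℝ) * 2 ^ m) ^ (-(1 / p)))).trans ?_
  have hexp : 1 - 1 / q = 1 / p := by rw [one_div, one_div, hpq.symm.one_sub_inv]
  rw [hexp, ← ENNReal.ofReal_one]
  refine ENNReal.ofReal_le_ofReal ?_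
  rw [Nat.cast_mul, Nat.cast_pow, Nat.cast_ofNat,
    abs_of_nonneg (Real.rpow_nonneg (by positivity) _), Real.rpow_neg (by positivity)]
  exact inv_mul_le_one

/-- Lemma 6 of the paper: `‖Φ_{n,1}‖ ≤ (k·2^n)^{-1/q} ‖Φ‖` (0-indexed: `j = 0`). -/
theorem Phi_n1_norm_bound (p q : ℝ) (hp : 1 < p) (hq : q = p / (p - 1))
    (k : ℕ) (hk : 1 ≤ k)
    (Φ : XFull k → ℝ)
    (hΦadd : ∀ x y : XFull k, MemX q k x → MemX q k y → Φ (x + y) = Φ x + Φ y)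
    (hΦbd : ∀ x : XFull k, MemX q k x → ENNReal.ofReal |Φ x| ≤ Xnorm q k x)
    (hΦu : Φ (uElt p k) = 1)
    (hΦZ : ∀ z ∈ Zset q k, Φ z = 0)
    (n : ℕ) :
    sSup {r : ℝ | ∃ x : XFull k, MemX q k x ∧ Xnorm q k x ≤ 1 ∧
        r = |Φ (chiMul (Aset k n ⟨0, by positivity⟩) x)|} ≤
    ((k : ℝ) * 2 ^ n) ^ (-(1 / q)) *
      sSup {r : ℝ | ∃ x : XFull k, MemX q k x ∧ Xnorm q k x ≤ 1 ∧ r = |Φ x|} := by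
  have hpq : p.HolderConjugate q := (Real.holderConjugate_iff_eq_conjExponent hp).2 hq
  have abs_Phi_le {x : XFull k} {C : ℝ} (hC : 0 ≤ C) (hx : Xnorm q k x ≤ ENNReal.ofReal C) :
      |Φ x| ≤ C :=
    (ENNReal.ofReal_le_ofReal_iff hC).1 ((hΦbd x (hx.trans_lt ENNReal.ofReal_lt_top)).trans hx)
  have hb : 0 ≤ ((k : ℝ) * 2 ^ n) ^ (-(1 / q)) := by positivity
  have hlocal : ∀ r ∈ {r : ℝ | ∃ x : XFull k, MemX q k x ∧ Xnorm q k x ≤ 1 ∧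
      r = |Φ (chiMul (Aset k n ⟨0, by positivity⟩) x)|}, r ≤ ((k : ℝ) * 2 ^ n) ^ (-(1 / q)) := by
    rintro _ ⟨x, hx, hx1, rfl⟩
    have hw := Xnorm_tailMean_chiMul_Aset_zero_le (n := n) hpq.symm.lt.le (by positivity) hx1
    rw [Phi_eq_Phi_tailMean hΦadd hΦZ ((Xnorm_chiMul_le _ x).trans_lt hx)
      (hw.trans_lt ENNReal.ofReal_lt_top)]
    exact abs_Phi_le hb hw
  have hglobal :
      1 ≤ sSup {r : ℝ | ∃ x : XFull k, MemX q k x ∧ Xnorm q k x ≤ 1 ∧ r = |Φ x|} := by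
    refine le_csSup ⟨1, ?_⟩ ⟨uElt p k, (Xnorm_uElt_le hpq k).trans_lt ENNReal.one_lt_top,
      Xnorm_uElt_le hpq k, by rw [hΦu, abs_one]⟩
    rintro _ ⟨x, -, hx1, rfl⟩
    exact abs_Phi_le zero_le_one (hx1.trans_eq ENNReal.ofReal_one.symm)
  exact (Real.sSup_le hlocal hb).trans (le_mul_of_one_le_right hb hglobal)
end

section
/- X_1 embeds complementably into ℓ^{p,∞}: there exist bounded linear maps S : X_1 → ℓ^{p,∞} and P : ℓ^{p,∞} → X_1 such that P ∘ S is the identity on X_1. -/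
/-!
Cut `ℕ` into blocks, the `n`-th one made of `k_n = 2^(n²)` copies of `{1, …, 2^n}`. `S` writes
`k_n^(-1/p) x_n` on each copy of block `n` and `P` averages the copies back with weight
`k_n^(1/p - 1)`, so `P ∘ S = id`, and `‖P‖ ≤ 1` since `k_n^(1/p - 1) (k_n |F|)^(1/q) = |F|^(1/q)`.
For `S`, a set of `m` points meeting block `n` in `T_n` carries at most
`‖x‖ · min(|T_n|^(1/q), k_n^(-1/p) |T_n|)` there (the first bound by Hölder over the copies).
Because `k_n` grows superexponentially, the first bound sums geometrically over the blocks below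
`√(log₂ m)`, the second over those above it, and the block at `√(log₂ m)` costs `m^(1/q)`.
-/

open MeasureTheory Set ENNReal

lemma wnorm_add_le {α : Type*} [MeasurableSpace α] (q : ℝ) (μ : Measure α) {f g : α → ℝ}
    (hf : Measurable f) : wnorm q μ (f + g) ≤ wnorm q μ f + wnorm q μ g := by
  refine iSup₂_le fun B hB => ?_
  have h1 : (∫⁻ x in B, ENNReal.ofReal |(f + g) x| ∂μ)
      ≤ (∫⁻ x in B, ENNReal.ofReal |f x| ∂μ) + (∫⁻ x in B, ENNReal.ofReal |g x| ∂μ) := by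
    rw [← lintegral_add_left (hf.abs.ennreal_ofReal)]
    refine lintegral_mono fun x => ?_
    rw [← ENNReal.ofReal_add (abs_nonneg _) (abs_nonneg _)]
    exact ENNReal.ofReal_le_ofReal (abs_add_le _ _)
  calc (∫⁻ x in B, ENNReal.ofReal |(f + g) x| ∂μ) / μ B ^ (1 / q)
      ≤ ((∫⁻ x in B, ENNReal.ofReal |f x| ∂μ) + (∫⁻ x in B, ENNReal.ofReal |g x| ∂μ))
          / μ B ^ (1 / q) := by gcongr
    _ = (∫⁻ x in B, ENNReal.ofReal |f x| ∂μ) / μ B ^ (1 / q)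
          + (∫⁻ x in B, ENNReal.ofReal |g x| ∂μ) / μ B ^ (1 / q) := ENNReal.add_div
    _ ≤ wnorm q μ f + wnorm q μ g := by
        gcongr
        · exact le_iSup₂ (f := fun B _ =>
            (∫⁻ x in B, ENNReal.ofReal |f x| ∂μ) / μ B ^ (1 / q)) B hB
        · exact le_iSup₂ (f := fun B _ =>
            (∫⁻ x in B, ENNReal.ofReal |g x| ∂μ) / μ B ^ (1 / q)) B hB

lemma wnorm_smul_le {α : Type*} [MeasurableSpace α] (q : ℝ) (μ : Measure α) (c : ℝ)
    (f : α → ℝ) : wnorm q μ (c • f) ≤ ENNReal.ofReal |c| * wnorm q μ f := by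
  refine iSup₂_le fun B hB => ?_
  have h1 : (∫⁻ x in B, ENNReal.ofReal |(c • f) x| ∂μ)
      = ENNReal.ofReal |c| * ∫⁻ x in B, ENNReal.ofReal |f x| ∂μ := by
    rw [← lintegral_const_mul' _ _ ENNReal.ofReal_ne_top]
    congr 1; funext x
    rw [← ENNReal.ofReal_mul (abs_nonneg c)]
    simp [abs_mul]
  rw [h1, div_eq_mul_inv, mul_assoc, ← div_eq_mul_inv]
  exact mul_le_mul' le_rfl (le_iSup₂ (f := fun B _ =>
    (∫⁻ x in B, ENNReal.ofReal |f x| ∂μ) / μ B ^ (1 / q)) B hB)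

lemma wnorm_zero {α : Type*} [MeasurableSpace α] (q : ℝ) (μ : Measure α) :
    wnorm q μ (0 : α → ℝ) = 0 := by
  refine le_antisymm (iSup₂_le fun B hB => ?_) (zero_le')
  simp

lemma MemW.add {α : Type*} [MeasurableSpace α] {q : ℝ} {μ : Measure α} {f g : α → ℝ}
    (hf : MemW q μ f) (hg : MemW q μ g) : MemW q μ (f + g) := by
  obtain ⟨hfm, ⟨s, hs, hsfin⟩, hfn⟩ := hf
  obtain ⟨hgm, ⟨t, ht, htfin⟩, hgn⟩ := hg
  refine ⟨hfm.add hgm, ⟨fun n => s n ∪ t n, ?_, fun n => ?_⟩, ?_⟩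
  · intro x hx
    have : f x ≠ 0 ∨ g x ≠ 0 := by
      by_contra h
      push_neg at h
      exact hx (by simp [h.1, h.2])
    rcases this with h | h
    · obtain ⟨S, ⟨n, rfl⟩, hxS⟩ := hs h
      exact mem_iUnion.2 ⟨n, Or.inl hxS⟩
    · obtain ⟨S, ⟨n, rfl⟩, hxS⟩ := ht h
      exact mem_iUnion.2 ⟨n, Or.inr hxS⟩
  · exact lt_of_le_of_lt (measure_union_le _ _) (ENNReal.add_lt_top.2 ⟨hsfin n, htfin n⟩)
  · exact lt_of_le_of_lt (wnorm_add_le q μ hfm) (ENNReal.add_lt_top.2 ⟨hfn, hgn⟩)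

lemma MemW.smul {α : Type*} [MeasurableSpace α] {q : ℝ} {μ : Measure α} (c : ℝ) {f : α → ℝ}
    (hf : MemW q μ f) : MemW q μ (c • f) := by
  obtain ⟨hfm, ⟨s, hs, hsfin⟩, hfn⟩ := hf
  refine ⟨hfm.const_smul c, ⟨s, fun x hx => hs ?_, hsfin⟩, ?_⟩
  · intro h; apply hx; simp [h]
  · refine lt_of_le_of_lt (wnorm_smul_le q μ c f) ?_
    exact ENNReal.mul_lt_top ENNReal.ofReal_lt_top hfn

lemma MemW.zero {α : Type*} [MeasurableSpace α] (q : ℝ) (μ : Measure α) :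
    MemW q μ (0 : α → ℝ) :=
  ⟨measurable_const, ⟨fun _ => ∅, by simp, by simp⟩, by rw [wnorm_zero]; exact ENNReal.zero_lt_top⟩

/-- The weak `L^p` space as a submodule of the space of all real functions. -/
noncomputable def WLp {α : Type*} [MeasurableSpace α] (q : ℝ) (μ : Measure α) :
    Submodule ℝ (α → ℝ) where
  carrier := {f | MemW q μ f}
  add_mem' hf hg := hf.add hg
  zero_mem' := MemW.zero q μ
  smul_mem' c f hf := hf.smul c


lemma Xnorm_add_le (q : ℝ) (k : ℕ) (x y : XFull k) :
    Xnorm q k (x + y) ≤ Xnorm q k x + Xnorm q k y := by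
  refine iSup_le fun n => ?_
  calc wnorm q Measure.count ((x + y) n)
      = wnorm q Measure.count (x n + y n) := rfl
    _ ≤ wnorm q Measure.count (x n) + wnorm q Measure.count (y n) :=
        wnorm_add_le q _ (measurable_of_finite _)
    _ ≤ Xnorm q k x + Xnorm q k y :=
        add_le_add (le_iSup (fun n => wnorm q Measure.count (x n)) n)
          (le_iSup (fun n => wnorm q Measure.count (y n)) n)

lemma Xnorm_smul_le (q : ℝ) (k : ℕ) (c : ℝ) (x : XFull k) :
    Xnorm q k (c • x) ≤ ENNReal.ofReal |c| * Xnorm q k x := by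
  refine iSup_le fun n => ?_
  calc wnorm q Measure.count ((c • x) n)
      = wnorm q Measure.count (c • x n) := rfl
    _ ≤ ENNReal.ofReal |c| * wnorm q Measure.count (x n) := wnorm_smul_le q _ c _
    _ ≤ ENNReal.ofReal |c| * Xnorm q k x :=
        mul_le_mul' le_rfl (le_iSup (fun n => wnorm q Measure.count (x n)) n)

lemma Xnorm_zero (q : ℝ) (k : ℕ) : Xnorm q k (0 : XFull k) = 0 := by
  refine le_antisymm (iSup_le fun n => ?_) (zero_le')
  exact le_of_eq (wnorm_zero q _)

/-- `X_k` as a submodule of the ambient product space. -/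
noncomputable def Xsub (q : ℝ) (k : ℕ) : Submodule ℝ (XFull k) where
  carrier := {x | MemX q k x}
  add_mem' hx hy :=
    lt_of_le_of_lt (Xnorm_add_le _ _ _ _) (ENNReal.add_lt_top.2 ⟨hx, hy⟩)
  zero_mem' := by
    show Xnorm _ _ (0 : XFull _) < ⊤
    rw [Xnorm_zero]; exact ENNReal.zero_lt_top
  smul_mem' c x hx :=
    lt_of_le_of_lt (Xnorm_smul_le _ _ c x)
      (ENNReal.mul_lt_top ENNReal.ofReal_lt_top hx)

open scoped Finset

section CountingMeasure

variable {α : Type*} [MeasurableSpace α] [MeasurableSingletonClass α]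

lemma sum_le_wnorm_count_mul (q : ℝ) (f : α → ℝ) (s : Finset α) :
    ∑ x ∈ s, ENNReal.ofReal |f x| ≤ wnorm q Measure.count f * (#s : ℝ≥0∞) ^ (1 / q) := by
  rcases s.eq_empty_or_nonempty with rfl | hs
  · simp
  have hcard : Measure.count (s : Set α) = #s := Measure.count_apply_finset s
  have hpos : (#s : ℝ≥0∞) ≠ 0 := by exact_mod_cast hs.card_pos.ne'
  have hle : (∫⁻ x in s, ENNReal.ofReal |f x| ∂Measure.count) / Measure.count (s : Set α) ^ (1 / q)
      ≤ wnorm q Measure.count f :=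
    le_iSup₂ (f := fun B (_ : MeasurableSet B ∧ 0 < Measure.count B ∧ Measure.count B < ⊤) =>
      (∫⁻ x in B, ENNReal.ofReal |f x| ∂Measure.count) / Measure.count B ^ (1 / q)) (s : Set α)
      ⟨s.measurableSet, by simpa [hcard, pos_iff_ne_zero] using hpos⟩
  have hpow : (#s : ℝ≥0∞) ^ (1 / q) ≠ 0 := by simp [hpos]
  have hpow' : (#s : ℝ≥0∞) ^ (1 / q) ≠ ⊤ := by simp [hpos]
  simpa only [lintegral_finset, Measure.count_singleton, mul_one, hcard,
    ENNReal.div_le_iff hpow hpow'] using hle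

lemma wnorm_count_le_iff {q : ℝ} {f : α → ℝ} {M : ℝ≥0∞} :
    wnorm q Measure.count f ≤ M ↔
      ∀ s : Finset α, ∑ x ∈ s, ENNReal.ofReal |f x| ≤ M * (#s : ℝ≥0∞) ^ (1 / q) := by
  refine ⟨fun h s => (sum_le_wnorm_count_mul q f s).trans (by gcongr), fun h => ?_⟩
  refine iSup₂_le fun B ⟨_, _, hB⟩ => ?_
  lift B to Finset α using Measure.count_apply_lt_top.mp hB
  rw [lintegral_finset, Measure.count_apply_finset]
  simpa only [Measure.count_singleton, mul_one] using ENNReal.div_le_of_le_mul (h B)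

lemma ofReal_abs_le_wnorm_count (q : ℝ) (f : α → ℝ) (a : α) :
    ENNReal.ofReal |f a| ≤ wnorm q Measure.count f := by
  simpa using sum_le_wnorm_count_mul q f {a}

lemma memW_count_of_wnorm_lt_top [Countable α] {q : ℝ} {f : α → ℝ}
    (hf : wnorm q Measure.count f < ⊤) : MemW q Measure.count f :=
  ⟨measurable_of_countable f,
    ⟨spanningSets Measure.count, by simp [iUnion_spanningSets],
      measure_spanningSets_lt_top Measure.count⟩, hf⟩

end CountingMeasure

lemma sum_rpow_one_div_le {ι : Type*} {p q : ℝ} (hpq : p.HolderConjugate q) (s : Finset ι)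
    (u : ι → ℝ≥0∞) :
    ∑ i ∈ s, u i ^ (1 / q) ≤ (#s : ℝ≥0∞) ^ (1 / p) * (∑ i ∈ s, u i) ^ (1 / q) := by
  have h := ENNReal.inner_le_Lp_mul_Lq s (fun _ => 1) (fun i => u i ^ (1 / q)) hpq
  simp only [one_mul, ENNReal.one_rpow, Finset.sum_const, nsmul_eq_mul, mul_one] at h
  simpa only [← ENNReal.rpow_mul, one_div_mul_cancel hpq.symm.ne_zero, ENNReal.rpow_one] using h

/-- Slice `T` along the second coordinate: each slice is a copy of a subset of `ι`, and Hölder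
recombines the slices. -/
lemma sum_fst_le_of_forall_finset {ι κ : Type*} [Fintype κ] {p q : ℝ}
    (hpq : p.HolderConjugate q) (g : ι → ℝ≥0∞) {W : ℝ≥0∞}
    (hg : ∀ F : Finset ι, ∑ i ∈ F, g i ≤ W * (#F : ℝ≥0∞) ^ (1 / q)) (T : Finset (ι × κ)) :
    ∑ z ∈ T, g z.1 ≤ (Fintype.card κ : ℝ≥0∞) ^ (1 / p) * W * (#T : ℝ≥0∞) ^ (1 / q) := by
  classical
  have hslice : ∀ r : κ, ∑ z ∈ T with z.2 = r, g z.1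
      ≤ W * (#{z ∈ T | z.2 = r} : ℝ≥0∞) ^ (1 / q) := by
    intro r
    have hinj : Set.InjOn Prod.fst (({z ∈ T | z.2 = r} : Finset (ι × κ)) : Set (ι × κ)) := by
      intro z hz z' hz' h
      rw [Finset.mem_coe, Finset.mem_filter] at hz hz'
      exact Prod.ext h (hz.2.trans hz'.2.symm)
    rw [← Finset.sum_image hinj, ← Finset.card_image_of_injOn hinj]
    exact hg _
  calc ∑ z ∈ T, g z.1 = ∑ r, ∑ z ∈ T with z.2 = r, g z.1 := (Finset.sum_fiberwise _ _ _).symm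
    _ ≤ ∑ r, W * (#{z ∈ T | z.2 = r} : ℝ≥0∞) ^ (1 / q) := Finset.sum_le_sum fun r _ => hslice r
    _ ≤ W * ((Fintype.card κ : ℝ≥0∞) ^ (1 / p) * (∑ r, (#{z ∈ T | z.2 = r} : ℝ≥0∞)) ^ (1 / q)) := by
        rw [← Finset.mul_sum]
        gcongr
        exact sum_rpow_one_div_le hpq _ _
    _ = (Fintype.card κ : ℝ≥0∞) ^ (1 / p) * W * (#T : ℝ≥0∞) ^ (1 / q) := by
        have hT : #T = ∑ r, #{z ∈ T | z.2 = r} :=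
          Finset.card_eq_sum_card_fiberwise fun _ _ => Finset.mem_univ _
        rw [hT, Nat.cast_sum]
        ring

/-- A model of `ℕ` cut into blocks, the `n`-th one made of `k n` copies of `Fin (d n)`. -/
abbrev Block (d k : ℕ → ℕ) := Σ n, Fin (d n) × Fin (k n)

lemma ofReal_natCast_rpow {k : ℕ} (hk : k ≠ 0) (e : ℝ) :
    ENNReal.ofReal ((k : ℝ) ^ e) = (k : ℝ≥0∞) ^ e := by
  rw [← ENNReal.ofReal_rpow_of_pos (by exact_mod_cast Nat.pos_of_ne_zero hk),
    ENNReal.ofReal_natCast]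

section Blocks

variable {d k : ℕ → ℕ} {p q : ℝ}

noncomputable def blockSpread (p : ℝ) (k : ℕ → ℕ) :
    ((n : ℕ) → Fin (d n) → ℝ) →ₗ[ℝ] (Block d k → ℝ) where
  toFun x z := (k z.1 : ℝ) ^ (-(1 / p)) * x z.1 z.2.1
  map_add' x y := by funext z; simp only [Pi.add_apply]; ring
  map_smul' c x := by funext z; simp only [Pi.smul_apply, smul_eq_mul, RingHom.id_apply]; ring

noncomputable def blockAverage (p : ℝ) (k : ℕ → ℕ) :
    (Block d k → ℝ) →ₗ[ℝ] ((n : ℕ) → Fin (d n) → ℝ) where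
  toFun f n j := (k n : ℝ) ^ (1 / p - 1) * ∑ r, f ⟨n, j, r⟩
  map_add' f g := by funext n j; simp only [Pi.add_apply, Finset.sum_add_distrib]; ring
  map_smul' c f := by
    funext n j; simp only [Pi.smul_apply, smul_eq_mul, RingHom.id_apply, ← Finset.mul_sum]; ring

lemma blockAverage_blockSpread (hk : ∀ n, k n ≠ 0) (x : (n : ℕ) → Fin (d n) → ℝ) :
    blockAverage p k (blockSpread p k x) = x := by
  funext n j
  have hkpos : (0 : ℝ) < k n := by exact_mod_cast Nat.pos_of_ne_zero (hk n)
  have hscale : (k n : ℝ) ^ (1 / p - 1) * k n * (k n : ℝ) ^ (-(1 / p)) = 1 := by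
    rw [← Real.rpow_add_one hkpos.ne', ← Real.rpow_add hkpos,
      show 1 / p - 1 + 1 + -(1 / p) = 0 by ring, Real.rpow_zero]
  simp only [blockAverage, blockSpread, LinearMap.coe_mk, AddHom.coe_mk, Finset.sum_const,
    Finset.card_univ, Fintype.card_fin, nsmul_eq_mul, ← mul_assoc]
  rw [hscale, one_mul]

lemma sum_blockSpread_slice_le (hpq : p.HolderConjugate q) {x : (n : ℕ) → Fin (d n) → ℝ} {n : ℕ}
    {A : ℝ≥0∞} (hA : wnorm q Measure.count (x n) ≤ A) (hk : k n ≠ 0)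
    (T : Finset (Fin (d n) × Fin (k n))) :
    ∑ a ∈ T, ENNReal.ofReal |blockSpread p k x ⟨n, a⟩|
      ≤ A * min ((#T : ℝ≥0∞) ^ (1 / q)) ((k n : ℝ≥0∞) ^ (-(1 / p)) * #T) := by
  have hk0 : (k n : ℝ≥0∞) ≠ 0 := by exact_mod_cast hk
  have hspread : ∀ a, ENNReal.ofReal |blockSpread p k x ⟨n, a⟩|
      = (k n : ℝ≥0∞) ^ (-(1 / p)) * ENNReal.ofReal |x n a.1| := fun a => by
    simp only [blockSpread, LinearMap.coe_mk, AddHom.coe_mk]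
    rw [abs_mul, abs_of_nonneg (by positivity), ENNReal.ofReal_mul (by positivity),
      ofReal_natCast_rpow hk]
  simp only [hspread, ← Finset.mul_sum]
  rw [mul_min_of_nonneg _ _ (zero_le (a := A))]
  refine le_min ?_ ?_
  · have h := sum_fst_le_of_forall_finset hpq (fun j => ENNReal.ofReal |x n j|)
      (wnorm_count_le_iff.1 hA) T
    rw [Fintype.card_fin] at h
    calc (k n : ℝ≥0∞) ^ (-(1 / p)) * ∑ a ∈ T, ENNReal.ofReal |x n a.1|
        ≤ (k n : ℝ≥0∞) ^ (-(1 / p)) * ((k n : ℝ≥0∞) ^ (1 / p) * A * (#T : ℝ≥0∞) ^ (1 / q)) := by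
          gcongr
      _ = A * (#T : ℝ≥0∞) ^ (1 / q) := by
          rw [← mul_assoc, ← mul_assoc, ← ENNReal.rpow_add _ _ hk0 (ENNReal.natCast_ne_top _),
            neg_add_cancel, ENNReal.rpow_zero, one_mul]
  · have h : ∑ a ∈ T, ENNReal.ofReal |x n a.1| ≤ #T * A := by
      simpa only [nsmul_eq_mul] using Finset.sum_le_card_nsmul T _ A
        fun a _ => (ofReal_abs_le_wnorm_count q (x n) a.1).trans hA
    calc (k n : ℝ≥0∞) ^ (-(1 / p)) * ∑ a ∈ T, ENNReal.ofReal |x n a.1|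
        ≤ (k n : ℝ≥0∞) ^ (-(1 / p)) * (#T * A) := by gcongr
      _ = A * ((k n : ℝ≥0∞) ^ (-(1 / p)) * #T) := by ring

lemma wnorm_blockAverage_le (hpq : p.HolderConjugate q) {f : Block d k → ℝ} {W : ℝ≥0∞}
    (hf : ∀ s : Finset (Block d k), ∑ z ∈ s, ENNReal.ofReal |f z| ≤ W * (#s : ℝ≥0∞) ^ (1 / q))
    {n : ℕ} (hk : k n ≠ 0) :
    wnorm q Measure.count (blockAverage p k f n) ≤ W := by
  refine wnorm_count_le_iff.2 fun F => ?_
  have hk0 : (k n : ℝ≥0∞) ≠ 0 := by exact_mod_cast hk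
  let embed : Fin (d n) × Fin (k n) ↪ Block d k :=
    Function.Embedding.sigmaMk (β := fun n => Fin (d n) × Fin (k n)) n
  have haverage : ∀ j, ENNReal.ofReal |blockAverage p k f n j|
      ≤ (k n : ℝ≥0∞) ^ (1 / p - 1) * ∑ r, ENNReal.ofReal |f ⟨n, j, r⟩| := fun j => by
    simp only [blockAverage, LinearMap.coe_mk, AddHom.coe_mk]
    rw [abs_mul, abs_of_nonneg (by positivity), ENNReal.ofReal_mul (by positivity),
      ofReal_natCast_rpow hk, ← ENNReal.ofReal_sum_of_nonneg fun _ _ => abs_nonneg _]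
    gcongr
    exact Finset.abs_sum_le_sum_abs _ _
  calc ∑ j ∈ F, ENNReal.ofReal |blockAverage p k f n j|
      ≤ ∑ j ∈ F, (k n : ℝ≥0∞) ^ (1 / p - 1) * ∑ r, ENNReal.ofReal |f ⟨n, j, r⟩| :=
        Finset.sum_le_sum fun j _ => haverage j
    _ = (k n : ℝ≥0∞) ^ (1 / p - 1) *
          ∑ z ∈ (F ×ˢ Finset.univ).map embed, ENNReal.ofReal |f z| := by
        rw [← Finset.mul_sum, Finset.sum_map, Finset.sum_product]
        rfl
    _ ≤ (k n : ℝ≥0∞) ^ (1 / p - 1) * (W * ((#F : ℝ≥0∞) * k n) ^ (1 / q)) := by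
        grw [hf]
        simp
    _ = W * (#F : ℝ≥0∞) ^ (1 / q) := by
        rw [ENNReal.mul_rpow_of_nonneg _ _ hpq.symm.one_div_nonneg, mul_left_comm,
          mul_left_comm _ (_ ^ (1 / q)), ← ENNReal.rpow_add _ _ hk0 (ENNReal.natCast_ne_top _),
          show 1 / p - 1 + 1 / q = 0 by linarith [hpq.one_div_add_one_div], ENNReal.rpow_zero,
          mul_one]

end Blocks

section DyadicSums

lemma sum_pow_le_of_injOn (r : ℝ≥0∞) {s : Finset ℕ} {g : ℕ → ℕ} (hg : Set.InjOn g s) :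
    ∑ n ∈ s, r ^ g n ≤ (1 - r)⁻¹ :=
  calc ∑ n ∈ s, r ^ g n = ∑ i ∈ s.image g, r ^ i := (Finset.sum_image hg).symm
    _ ≤ ∑' i, r ^ i := ENNReal.sum_le_tsum _
    _ = (1 - r)⁻¹ := ENNReal.tsum_geometric r

lemma two_rpow_neg_pow_mul (e x : ℝ) (j : ℕ) :
    ((2 : ℝ≥0∞) ^ (-e)) ^ j * 2 ^ x = 2 ^ (x - j * e) := by
  rw [← ENNReal.rpow_natCast, ← ENNReal.rpow_mul, ← ENNReal.rpow_add _ _ two_ne_zero ofNat_ne_top]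
  ring_nf

lemma sum_two_rpow_le {e : ℝ} {s : Finset ℕ} {g : ℕ → ℕ} (hg : Set.InjOn g s) {L : ℕ}
    (hL : ∀ n ∈ s, g n ≤ L) :
    ∑ n ∈ s, (2 : ℝ≥0∞) ^ ((g n : ℝ) * e) ≤ (1 - 2 ^ (-e))⁻¹ * 2 ^ ((L : ℝ) * e) := by
  have hterm : ∀ n ∈ s,
      (2 : ℝ≥0∞) ^ ((g n : ℝ) * e) = (2 ^ (-e)) ^ (L - g n) * 2 ^ ((L : ℝ) * e) := by
    intro n hn
    rw [two_rpow_neg_pow_mul, Nat.cast_sub (hL n hn)]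
    ring_nf
  rw [Finset.sum_congr rfl hterm, ← Finset.sum_mul]
  gcongr
  refine sum_pow_le_of_injOn _ fun a ha b hb h => hg ha hb ?_
  have := hL a ha
  have := hL b hb
  omega

lemma sum_two_rpow_neg_le {e : ℝ} {s : Finset ℕ} {g : ℕ → ℕ} (hg : Set.InjOn g s) {L : ℕ}
    (hL : ∀ n ∈ s, L ≤ g n) :
    ∑ n ∈ s, (2 : ℝ≥0∞) ^ ((g n : ℝ) * -e) ≤ (1 - 2 ^ (-e))⁻¹ * 2 ^ ((L : ℝ) * -e) := by
  have hterm : ∀ n ∈ s,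
      (2 : ℝ≥0∞) ^ ((g n : ℝ) * -e) = (2 ^ (-e)) ^ (g n - L) * 2 ^ ((L : ℝ) * -e) := by
    intro n hn
    rw [two_rpow_neg_pow_mul, Nat.cast_sub (hL n hn)]
    ring_nf
  rw [Finset.sum_congr rfl hterm, ← Finset.sum_mul]
  gcongr
  refine sum_pow_le_of_injOn _ fun a ha b hb h => hg ha hb ?_
  have := hL a ha
  have := hL b hb
  omega

lemma natCast_two_pow_rpow (a : ℕ) (e : ℝ) :
    ((2 ^ a : ℕ) : ℝ≥0∞) ^ e = 2 ^ ((a : ℝ) * e) := by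
  rw [Nat.cast_pow, Nat.cast_ofNat, ← ENNReal.rpow_natCast, ← ENNReal.rpow_mul]

end DyadicSums

section SquareBlocks

def blockRep (n : ℕ) : ℕ := 2 ^ n ^ 2

lemma blockRep_ne_zero (n : ℕ) : blockRep n ≠ 0 := pow_ne_zero _ two_ne_zero

noncomputable def spreadConst (p q : ℝ) : ℝ≥0∞ :=
  (1 - 2 ^ (-(1 / q)))⁻¹ + 1 + (1 - 2 ^ (-(1 / p)))⁻¹

variable {p q : ℝ} {m : ℕ}

lemma spreadConst_ne_top (hpq : p.HolderConjugate q) : spreadConst p q ≠ ⊤ := by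
  have hinv : ∀ {e : ℝ}, 0 < e → (1 - (2 : ℝ≥0∞) ^ (-e))⁻¹ ≠ ⊤ := fun he => by
    rw [Ne, ENNReal.inv_eq_top, tsub_eq_zero_iff_le, not_le]
    exact ENNReal.rpow_lt_one_of_one_lt_of_neg one_lt_two (neg_neg_of_pos he)
  exact ENNReal.add_ne_top.2 ⟨ENNReal.add_ne_top.2 ⟨hinv hpq.symm.one_div_pos, one_ne_top⟩,
    hinv hpq.one_div_pos⟩

lemma one_le_spreadConst : 1 ≤ spreadConst p q :=
  le_add_right (le_add_left le_rfl)

lemma sum_small_blocks_le {e : ℝ} (he : 0 ≤ e) (s : Finset ℕ) {t : ℕ → ℕ}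
    (ht : ∀ n, t n ≤ 2 ^ (n ^ 2 + n)) (hm : m ≠ 0) :
    ∑ n ∈ s with n < Nat.sqrt (Nat.log 2 m), (t n : ℝ≥0∞) ^ e
      ≤ (1 - 2 ^ (-e))⁻¹ * (m : ℝ≥0∞) ^ e := by
  set L := Nat.log 2 m
  have hmono : StrictMono fun n : ℕ => n ^ 2 + n := strictMono_nat_of_lt_succ fun n => by nlinarith
  have hL : ∀ n ∈ s.filter (· < Nat.sqrt L), n ^ 2 + n ≤ L := fun n hn => by
    have h1 := Nat.pow_le_pow_left (Finset.mem_filter.1 hn).2 2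
    nlinarith [Nat.sqrt_le' L]
  calc ∑ n ∈ s with n < Nat.sqrt L, (t n : ℝ≥0∞) ^ e
      ≤ ∑ n ∈ s with n < Nat.sqrt L, (2 : ℝ≥0∞) ^ (((n ^ 2 + n : ℕ) : ℝ) * e) := by
        gcongr with n
        rw [← natCast_two_pow_rpow]
        gcongr
        exact_mod_cast ht n
    _ ≤ (1 - 2 ^ (-e))⁻¹ * 2 ^ ((L : ℝ) * e) := sum_two_rpow_le hmono.injective.injOn hL
    _ ≤ (1 - 2 ^ (-e))⁻¹ * (m : ℝ≥0∞) ^ e := by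
        rw [← natCast_two_pow_rpow]
        gcongr
        exact_mod_cast Nat.pow_log_le_self 2 hm

lemma sum_large_blocks_le (hpq : p.HolderConjugate q) (s : Finset ℕ) (hm : m ≠ 0) :
    ∑ n ∈ s with Nat.sqrt (Nat.log 2 m) < n, (blockRep n : ℝ≥0∞) ^ (-(1 / p)) * m
      ≤ (1 - 2 ^ (-(1 / p)))⁻¹ * (m : ℝ≥0∞) ^ (1 / q) := by
  set L := Nat.log 2 m
  have hL : ∀ n ∈ s.filter (Nat.sqrt L < ·), L + 1 ≤ n ^ 2 := fun n hn => by
    have h1 := Nat.pow_le_pow_left (Finset.mem_filter.1 hn).2 2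
    have h2 := Nat.lt_succ_sqrt' L
    omega
  have hm_le : (m : ℝ≥0∞) ≤ 2 ^ (((L + 1 : ℕ) : ℝ) * (1 / p)) * (m : ℝ≥0∞) ^ (1 / q) :=
    calc (m : ℝ≥0∞) = (m : ℝ≥0∞) ^ (1 / p) * (m : ℝ≥0∞) ^ (1 / q) := by
          rw [← ENNReal.rpow_add _ _ (by exact_mod_cast hm) (natCast_ne_top m),
            hpq.one_div_add_one_div, div_one, ENNReal.rpow_one]
      _ ≤ 2 ^ (((L + 1 : ℕ) : ℝ) * (1 / p)) * (m : ℝ≥0∞) ^ (1 / q) := by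
          rw [← natCast_two_pow_rpow]
          gcongr
          · exact hpq.one_div_nonneg
          · exact_mod_cast (Nat.lt_pow_succ_log_self one_lt_two m).le
  calc ∑ n ∈ s with Nat.sqrt L < n, (blockRep n : ℝ≥0∞) ^ (-(1 / p)) * m
      = (∑ n ∈ s with Nat.sqrt L < n, (2 : ℝ≥0∞) ^ (((n ^ 2 : ℕ) : ℝ) * -(1 / p))) * m := by
        simp only [blockRep, natCast_two_pow_rpow, Finset.sum_mul]
    _ ≤ (1 - 2 ^ (-(1 / p)))⁻¹ * 2 ^ (((L + 1 : ℕ) : ℝ) * -(1 / p)) *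
          (2 ^ (((L + 1 : ℕ) : ℝ) * (1 / p)) * (m : ℝ≥0∞) ^ (1 / q)) := by
        gcongr
        exact sum_two_rpow_neg_le (g := (· ^ 2)) (Nat.pow_left_injective two_ne_zero).injOn hL
    _ = (1 - 2 ^ (-(1 / p)))⁻¹ * (m : ℝ≥0∞) ^ (1 / q) := by
        rw [mul_assoc, ← mul_assoc (2 ^ _), ← ENNReal.rpow_add _ _ two_ne_zero ofNat_ne_top,
          mul_neg, neg_add_cancel, ENNReal.rpow_zero, one_mul]

lemma sum_min_le_spreadConst_mul (hpq : p.HolderConjugate q) (s : Finset ℕ) {t : ℕ → ℕ}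
    (ht : ∀ n, t n ≤ 2 ^ (n ^ 2 + n)) :
    ∑ n ∈ s, min ((t n : ℝ≥0∞) ^ (1 / q)) ((blockRep n : ℝ≥0∞) ^ (-(1 / p)) * t n)
      ≤ spreadConst p q * ((∑ n ∈ s, t n : ℕ) : ℝ≥0∞) ^ (1 / q) := by
  set m := ∑ n ∈ s, t n
  rcases eq_or_ne m 0 with hm | hm
  · have ht0 := Finset.sum_eq_zero_iff.1 hm
    refine (Finset.sum_eq_zero fun n hn => ?_).trans_le zero_le
    simp [ht0 n hn]
  set N := Nat.sqrt (Nat.log 2 m)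
  have htm : ∀ n ∈ s, t n ≤ m := fun n hn => Finset.single_le_sum (fun _ _ => Nat.zero_le _) hn
  have hmid : ∑ n ∈ (s.filter (¬· < N)).filter (· = N),
      min ((t n : ℝ≥0∞) ^ (1 / q)) ((blockRep n : ℝ≥0∞) ^ (-(1 / p)) * t n)
        ≤ (m : ℝ≥0∞) ^ (1 / q) :=
    calc _ ≤ ∑ n ∈ (s.filter (¬· < N)).filter (· = N), (m : ℝ≥0∞) ^ (1 / q) := by
          refine Finset.sum_le_sum fun n hn => (min_le_left _ _).trans ?_
          gcongr
          · exact hpq.symm.one_div_nonneg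
          · exact htm n (Finset.mem_filter.1 (Finset.mem_filter.1 hn).1).1
      _ ≤ ∑ n ∈ {N}, (m : ℝ≥0∞) ^ (1 / q) :=
          Finset.sum_le_sum_of_subset fun n hn => by simpa using (Finset.mem_filter.1 hn).2
      _ = (m : ℝ≥0∞) ^ (1 / q) := Finset.sum_singleton _ _
  have hhigh : (s.filter (¬· < N)).filter (¬· = N) = s.filter (N < ·) := by
    rw [Finset.filter_filter]
    exact Finset.filter_congr fun n _ => by omega
  rw [← Finset.sum_filter_add_sum_filter_not s (· < N),
    ← Finset.sum_filter_add_sum_filter_not (s.filter (¬· < N)) (· = N), hhigh]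
  calc _ ≤ (1 - 2 ^ (-(1 / q)))⁻¹ * (m : ℝ≥0∞) ^ (1 / q) +
        ((m : ℝ≥0∞) ^ (1 / q) + (1 - 2 ^ (-(1 / p)))⁻¹ * (m : ℝ≥0∞) ^ (1 / q)) := by
        gcongr
        · exact (Finset.sum_le_sum fun n _ => min_le_left _ _).trans
            (sum_small_blocks_le hpq.symm.one_div_nonneg s ht hm)
        · refine (Finset.sum_le_sum fun n hn => (min_le_right _ _).trans ?_).trans
            (sum_large_blocks_le hpq s hm)
          gcongr
          exact htm n (Finset.mem_filter.1 hn).1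
    _ = spreadConst p q * (m : ℝ≥0∞) ^ (1 / q) := by
        rw [spreadConst]
        ring

lemma sum_blockSpread_le_spreadConst_mul {d : ℕ → ℕ} (hpq : p.HolderConjugate q)
    (hd : ∀ n, d n ≤ 2 ^ n) {x : (n : ℕ) → Fin (d n) → ℝ} {A : ℝ≥0∞}
    (hA : ∀ n, wnorm q Measure.count (x n) ≤ A) (B : Finset (Block d blockRep)) :
    ∑ z ∈ B, ENNReal.ofReal |blockSpread p blockRep x z|
      ≤ spreadConst p q * A * (#B : ℝ≥0∞) ^ (1 / q) := by
  classical
  set slice := fun n => B.preimage (Sigma.mk n) sigma_mk_injective.injOn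
  have hslice : ∀ n, #(slice n) ≤ 2 ^ (n ^ 2 + n) := fun n =>
    calc #(slice n) ≤ d n * blockRep n := by simpa using Finset.card_le_univ (slice n)
      _ ≤ 2 ^ n * 2 ^ n ^ 2 := Nat.mul_le_mul_right _ (hd n)
      _ = 2 ^ (n ^ 2 + n) := by rw [← pow_add, add_comm]
  rw [← Finset.sigma_image_fst_preimage_mk B, Finset.sum_sigma, Finset.card_sigma]
  calc _ ≤ ∑ n ∈ B.image Sigma.fst, A *
        min ((#(slice n) : ℝ≥0∞) ^ (1 / q)) ((blockRep n : ℝ≥0∞) ^ (-(1 / p)) * #(slice n)) :=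
        Finset.sum_le_sum fun n _ => sum_blockSpread_slice_le hpq (hA n) (blockRep_ne_zero n) _
    _ ≤ A * (spreadConst p q *
          ((∑ n ∈ B.image Sigma.fst, #(slice n) : ℕ) : ℝ≥0∞) ^ (1 / q)) := by
        rw [← Finset.mul_sum]
        gcongr
        exact sum_min_le_spreadConst_mul hpq _ hslice
    _ = _ := by ring

end SquareBlocks

section NatEmbedding

instance : Infinite (Block (fun n => 1 * 2 ^ n) blockRep) :=
  Infinite.of_injective
    (fun n => ⟨n, ⟨0, by positivity⟩, ⟨0, Nat.pos_of_ne_zero (blockRep_ne_zero n)⟩⟩)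
    fun _ _ h => (Sigma.mk.inj_iff.1 h).1

/-- Any bijection will do: the weak `ℓ^p` norm on the counting measure does not see the order
of the points. -/
noncomputable def natEquivBlock : ℕ ≃ Block (fun n => 1 * 2 ^ n) blockRep :=
  nonempty_equiv_of_countable.some

noncomputable def spreadNat (p : ℝ) : XFull 1 →ₗ[ℝ] (ℕ → ℝ) :=
  LinearMap.funLeft ℝ ℝ natEquivBlock ∘ₗ blockSpread p blockRep

noncomputable def averageNat (p : ℝ) : (ℕ → ℝ) →ₗ[ℝ] XFull 1 :=
  blockAverage p blockRep ∘ₗ LinearMap.funLeft ℝ ℝ natEquivBlock.symm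

variable {p q : ℝ}

lemma averageNat_spreadNat (x : XFull 1) : averageNat p (spreadNat p x) = x := by
  have hcomp :
      LinearMap.funLeft ℝ ℝ natEquivBlock.symm (spreadNat p x) = blockSpread p blockRep x := by
    funext z
    simp [spreadNat, LinearMap.funLeft]
  rw [averageNat, LinearMap.comp_apply, hcomp]
  exact blockAverage_blockSpread blockRep_ne_zero x

lemma wnorm_spreadNat_le (hpq : p.HolderConjugate q) (x : XFull 1) :
    wnorm q Measure.count (spreadNat p x) ≤ spreadConst p q * Xnorm q 1 x := by
  refine wnorm_count_le_iff.2 fun s => ?_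
  have h := sum_blockSpread_le_spreadConst_mul hpq (fun n => (one_mul _).le) (A := Xnorm q 1 x)
    (fun n => le_iSup (fun n => wnorm q Measure.count (x n)) n) (s.map natEquivBlock.toEmbedding)
  rwa [Finset.sum_map, Finset.card_map] at h

lemma Xnorm_averageNat_le (hpq : p.HolderConjugate q) (f : ℕ → ℝ) :
    Xnorm q 1 (averageNat p f) ≤ wnorm q Measure.count f :=
  iSup_le fun n => wnorm_blockAverage_le (f := f ∘ natEquivBlock.symm) hpq (fun s => by
    have h := sum_le_wnorm_count_mul q f (s.map natEquivBlock.symm.toEmbedding)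
    rwa [Finset.sum_map, Finset.card_map] at h) (blockRep_ne_zero n)

end NatEmbedding

/-- Theorem 6 of the paper: `X_1 = (∑_{n≥0} ⊕ ℓ^{p,∞}(2^n))_{ℓ∞}` embeds complementably
into `ℓ^{p,∞}`. -/
theorem X1_embeds_complementably_in_weak_lp (p q : ℝ) (hp : 1 < p) (hq : q = p / (p - 1)) :
    ∃ (S : Xsub q 1 →ₗ[ℝ] WLp q (Measure.count : Measure ℕ))
      (P : WLp q (Measure.count : Measure ℕ) →ₗ[ℝ] Xsub q 1),
      (∃ C : ℝ, 0 < C ∧ ∀ x : Xsub q 1,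
        wnorm q (Measure.count : Measure ℕ) ((S x : WLp q (Measure.count : Measure ℕ)) : ℕ → ℝ)
          ≤ ENNReal.ofReal C * Xnorm q 1 (x : XFull 1)) ∧
      (∃ C : ℝ, 0 < C ∧ ∀ f : WLp q (Measure.count : Measure ℕ),
        Xnorm q 1 ((P f : Xsub q 1) : XFull 1)
          ≤ ENNReal.ofReal C * wnorm q (Measure.count : Measure ℕ) (f : ℕ → ℝ)) ∧
      (∀ x : Xsub q 1, P (S x) = x) := by
  have hpq : p.HolderConjugate q := (Real.holderConjugate_iff_eq_conjExponent hp).2 hq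
  have hC := spreadConst_ne_top hpq
  refine ⟨(spreadNat p).restrict fun x hx => memW_count_of_wnorm_lt_top
      ((wnorm_spreadNat_le hpq x).trans_lt (ENNReal.mul_lt_top hC.lt_top hx)),
    (averageNat p).restrict fun f hf => (Xnorm_averageNat_le hpq f).trans_lt hf.2.2,
    ⟨(spreadConst p q).toReal, ENNReal.toReal_pos (one_le_spreadConst.trans_lt' one_pos).ne' hC,
      fun x => ?_⟩,
    ⟨1, one_pos, fun f => ?_⟩, fun x => Subtype.ext (averageNat_spreadNat x)⟩
  · rw [ENNReal.ofReal_toReal hC]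
    exact wnorm_spreadNat_le hpq x
  · rw [ENNReal.ofReal_one, one_mul]
    exact Xnorm_averageNat_le hpq f
end
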